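/- Let G be a positive trace-class operator on a Hilbert space H with eigenvalues λ₁ ≥ λ₂ ≥ … (listed with multiplicity, from an orthonormal eigenbasis) and let (ψᵢ) be any orthonormal basis. Then for every n, ∑_{k=1}^n ⟨ψₖ, Gψₖ⟩ ≤ ∑_{k=1}^n λₖ. -/

import Mathlib

/-!
Expanding in the eigenbasis `e`, `⟪b k, G (b k)⟫ = ∑ⱼ λⱼ |⟪eⱼ, b k⟫|²`, so the left-hand side is
`∑ⱼ λⱼ tⱼ` with weights `tⱼ = ∑_{k<n} |⟪eⱼ, b k⟫|²`. By Bessel `0 ≤ tⱼ ≤ 1` and by Parseval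
`∑ⱼ tⱼ = n`; among such weights, `∑ⱼ λⱼ tⱼ` is largest for the indicator of `{0, …, n-1}`
because `λ` is decreasing.
-/

open scoped InnerProductSpace ComplexConjugate
noncomputable section

variable {H : Type*} [NormedAddCommGroup H] [InnerProductSpace ℂ H]

/-- The rank-one operator `|u⟩⟨v| : w ↦ ⟪v, w⟫ u` (inner product conjugate-linear
in the first variable). -/
def rankOne (u v : H) : H →L[ℂ] H := (innerSL ℂ v).smulRight u

open Finset RCLike

theorem HasSum.le_sum_range_of_antitone {lam t : ℕ → ℝ} {n : ℕ} {s : ℝ}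
    (hs : HasSum (fun j => lam j * t j) s) (hlam : Antitone lam)
    (ht0 : ∀ j, 0 ≤ t j) (ht1 : ∀ j, t j ≤ 1) (ht : HasSum t n) :
    s ≤ ∑ j ∈ range n, lam j := by
  have hfin : HasSum (fun j => if j ∈ range n then lam j - lam n else 0)
      (∑ j ∈ range n, (lam j - lam n)) := by
    convert hasSum_sum_of_ne_finset_zero (s := range n) (L := .unconditional ℕ)
      fun j hj => if_neg hj using 1
    exact sum_congr rfl fun j hj => (if_pos hj).symm
  have hgap := hfin.sub (hs.sub (ht.mul_left (lam n)))
  have hgap_eq : ∑ j ∈ range n, (lam j - lam n) - (s - lam n * n) = ∑ j ∈ range n, lam j - s := by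
    rw [sum_sub_distrib, sum_const, card_range, nsmul_eq_mul]; ring
  rw [hgap_eq] at hgap
  -- each term is `(lam j - lam n) * (𝟙[j < n] - t j) ≥ 0`
  refine sub_nonneg.mp (hgap.nonneg fun j => ?_)
  by_cases hj : j ∈ range n
  · have := hlam (mem_range.mp hj).le
    simp only [if_pos hj]; nlinarith [ht1 j]
  · have := hlam (not_lt.mp (mem_range.not.mp hj))
    simp only [if_neg hj]; nlinarith [ht0 j]

section
variable {𝕜 E ι : Type*} [RCLike 𝕜] [NormedAddCommGroup E] [InnerProductSpace 𝕜 E]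

theorem HilbertBasis.hasSum_norm_inner_sq (e : HilbertBasis ι 𝕜 E) (x : E) :
    HasSum (fun i => ‖⟪e i, x⟫_𝕜‖ ^ 2) (‖x‖ ^ 2) := by
  have hterm : ∀ i, ⟪x, e i⟫_𝕜 * ⟪e i, x⟫_𝕜 = ((‖⟪e i, x⟫_𝕜‖ ^ 2 : ℝ) : 𝕜) := fun i => by
    rw [← inner_conj_symm x, RCLike.conj_mul]; norm_cast
  simpa only [hterm, reCLM_apply, ofReal_re, inner_self_eq_norm_sq]
    using (e.hasSum_inner_mul_inner x x).mapL reCLM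

theorem HilbertBasis.hasSum_eigenvalue_mul_norm_inner_sq (e : HilbertBasis ι 𝕜 E)
    {T : E →ₗ[𝕜] E} (hT : T.IsSymmetric) {μ : ι → ℝ} (he : ∀ i, T (e i) = (μ i : 𝕜) • e i)
    (x : E) : HasSum (fun i => μ i * ‖⟪e i, x⟫_𝕜‖ ^ 2) (re ⟪x, T x⟫_𝕜) := by
  have hterm : ∀ i, ⟪x, e i⟫_𝕜 * ⟪e i, T x⟫_𝕜 = ((μ i * ‖⟪e i, x⟫_𝕜‖ ^ 2 : ℝ) : 𝕜) := fun i => by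
    rw [← hT, he, inner_smul_left, conj_ofReal, ← inner_conj_symm x, mul_left_comm,
      RCLike.conj_mul]
    norm_cast
  simpa only [hterm, reCLM_apply, ofReal_re] using (e.hasSum_inner_mul_inner x (T x)).mapL reCLM

theorem HilbertBasis.hasSum_sum_norm_inner_sq (e : HilbertBasis ι 𝕜 E) {κ : Type*}
    {v : κ → E} (hv : Orthonormal 𝕜 v) (s : Finset κ) :
    HasSum (fun i => ∑ k ∈ s, ‖⟪e i, v k⟫_𝕜‖ ^ 2) s.card := by
  convert hasSum_sum fun k _ => e.hasSum_norm_inner_sq (v k)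
  simp [hv.1]

end

theorem stmt16_general [CompleteSpace H] (G : H →L[ℂ] H) (hGa : IsSelfAdjoint G)
    (lam : ℕ → ℝ) (hmono : Antitone lam)
    (e : HilbertBasis ℕ ℂ H) (heig : ∀ k, G (e k) = (lam k : ℂ) • e k)
    (b : HilbertBasis ℕ ℂ H) (n : ℕ) :
    ∑ k ∈ Finset.range n, (⟪b k, G (b k)⟫_ℂ).re ≤ ∑ k ∈ Finset.range n, lam k := by
  have hdiag : HasSum (fun j => lam j * ∑ k ∈ range n, ‖⟪e j, b k⟫_ℂ‖ ^ 2)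
      (∑ k ∈ range n, (⟪b k, G (b k)⟫_ℂ).re) := by
    simpa only [mul_sum, re_to_complex, ContinuousLinearMap.coe_coe] using hasSum_sum fun k _ =>
      e.hasSum_eigenvalue_mul_norm_inner_sq hGa.isSymmetric heig (b k)
  refine hdiag.le_sum_range_of_antitone hmono (fun j => sum_nonneg fun k _ => by positivity)
    (fun j => ?_) (by simpa using e.hasSum_sum_norm_inner_sq b.orthonormal (range n))
  calc ∑ k ∈ range n, ‖⟪e j, b k⟫_ℂ‖ ^ 2 = ∑ k ∈ range n, ‖⟪b k, e j⟫_ℂ‖ ^ 2 := by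
        simp only [norm_inner_symm]
    _ ≤ ‖e j‖ ^ 2 := b.orthonormal.sum_inner_products_le _
    _ = 1 := by simp [e.orthonormal.1 j]

theorem stmt16 [CompleteSpace H] (G : H →L[ℂ] H) (hGa : IsSelfAdjoint G)
    (lam : ℕ → ℝ) (hpos : ∀ k, 0 ≤ lam k) (hmono : Antitone lam) (hsum : Summable lam)
    (e : HilbertBasis ℕ ℂ H) (heig : ∀ k, G (e k) = (lam k : ℂ) • e k)
    (b : HilbertBasis ℕ ℂ H) (n : ℕ) :
    ∑ k ∈ Finset.range n, (⟪b k, G (b k)⟫_ℂ).re ≤ ∑ k ∈ Finset.range n, lam k :=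
  stmt16_general G hGa lam hmono e heig b n
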